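/- arXiv:1502.00829 — 4 statements merged into one kernel-verified Lean document; each statement's English description precedes it below -/
import Mathlib

section
/- If X is d-separated from Y conditional on Z in a DAG G, then in every probability distribution P that satisfies the local directed Markov condition for G, X is independent of Y conditional on Z. -/
/-!
Conditional independence of σ-algebras is a semigraphoid: symmetry and decomposition are in
Mathlib, and weak union and contraction follow from the characterization of `m₁ ⫫ m₂ | m'` by
`μ⟦s | m₂ ⊔ m'⟧ = μ⟦s | m'⟧` for `s ∈ m₁`. The global Markov property is then proved on ancestral
sets `W` by induction, removing a sink `w` of `W`. If `w ∈ A`, the local Markov property at `w`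
gives `w ⫫ B | C ∪ S` for `C = (pa w \ S) ∪ (A \ {w})`, and contraction combines it with the
induction hypothesis `C ⫫ B | S`. If `w ∈ S`, then `pa w \ S` is d-separated from one side, say
`B`, given `S \ {w}` (otherwise `w` would be an open collider); contraction and weak union then
move `w` into the conditioning set. d-connection is handled through walks, which concatenate
freely, and a shortest d-connecting walk is an active path.
-/

/-- A directed acyclic graph on vertex set `V`. -/
structure DAG (V : Type*) where
  Edge : V → V → Prop
  acyclic : ∀ x, ¬ Relation.TransGen Edge x x

namespace DAG

variable {V : Type*} (G : DAG V)

/-- `x` and `y` are adjacent: there is an edge between them in either direction. -/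
def Adj (x y : V) : Prop := G.Edge x y ∨ G.Edge y x

/-- `y` is a descendant of `x` (`x` is an ancestor of `y`); reflexive. -/
def Desc (x y : V) : Prop := Relation.ReflTransGen G.Edge x y

/-- The parents of `v`. -/
def Parents (v : V) : Set V := {u | G.Edge u v}

/-- The vertices that are neither parents nor descendants of `v`. -/
def NonDescNonPar (v : V) : Set V := {u | ¬ G.Desc v u ∧ ¬ G.Edge u v}

/-- `b` is a collider on the path `p`: `p` contains a consecutive subsequence
`a, b, c` with both edges pointing into `b`. -/
def ColliderOn (p : List V) (b : V) : Prop :=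
  ∃ a c, [a, b, c] <:+: p ∧ G.Edge a b ∧ G.Edge c b

/-- `b` is active on the path `p` between `x` and `y` conditional on `Z`:
it is an endpoint, or a noncollider not in `Z`, or a collider that is in `Z`
or has a descendant in `Z`. -/
def ActiveOn (p : List V) (x y : V) (Z : Set V) (b : V) : Prop :=
  b = x ∨ b = y ∨
    (¬ G.ColliderOn p b ∧ b ∉ Z) ∨
    (G.ColliderOn p b ∧ ∃ d ∈ Z, G.Desc b d)

/-- `p` is an acyclic path between `x` and `y`, every vertex of which is
active conditional on `Z`. -/
def ActivePath (p : List V) (x y : V) (Z : Set V) : Prop :=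
  p.Nodup ∧ 2 ≤ p.length ∧ p.Chain' G.Adj ∧
    p.head? = some x ∧ p.getLast? = some y ∧
    ∀ b ∈ p, G.ActiveOn p x y Z b

/-- `x` is d-separated from `y` conditional on `Z`: there is no active acyclic
path between `x` and `y` conditional on `Z`. -/
def DSep (x y : V) (Z : Set V) : Prop := ¬ ∃ p : List V, G.ActivePath p x y Z

/-- `(x, y, z)` is an unshielded collider. -/
def UnshieldedCollider (x y z : V) : Prop :=
  G.Edge x y ∧ G.Edge z y ∧ ¬ G.Adj x z

/-- `(x, y, z)` is an unshielded noncollider. -/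
def UnshieldedNoncollider (x y z : V) : Prop :=
  G.Adj x y ∧ G.Adj y z ∧ ¬ G.Adj x z ∧ ¬ (G.Edge x y ∧ G.Edge z y)

end DAG

open MeasureTheory ProbabilityTheory

/-- The σ-algebra generated by the family of variables `f i` for `i ∈ S`. -/
def genFrom {Ω V : Type*} (f : V → Ω → ℝ) (S : Set V) : MeasurableSpace Ω :=
  ⨆ i ∈ S, MeasurableSpace.comap (f i) inferInstance

lemma genFrom_le {Ω V : Type*} [mΩ : MeasurableSpace Ω] (f : V → Ω → ℝ)
    (hf : ∀ i, Measurable (f i)) (S : Set V) : genFrom f S ≤ mΩ :=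
  iSup₂_le fun i _ => (hf i).comap_le

/-- The set of variables indexed by `A` is conditionally independent of the set of
variables indexed by `B` given the set of variables indexed by `C`, under `μ`. -/
def CI {Ω V : Type*} [mΩ : MeasurableSpace Ω] [StandardBorelSpace Ω]
    (μ : Measure Ω) [IsFiniteMeasure μ] (f : V → Ω → ℝ) (hf : ∀ i, Measurable (f i))
    (A B C : Set V) : Prop :=
  ProbabilityTheory.CondIndep (genFrom f C) (genFrom f A) (genFrom f B)
    (genFrom_le f hf C) μ

/-- `μ` satisfies the local directed Markov condition for `G` (with variables `f`):
each variable is independent of its non-parents-non-descendants given its parents. -/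
def LocalMarkov {Ω V : Type*} [mΩ : MeasurableSpace Ω] [StandardBorelSpace Ω]
    (μ : Measure Ω) [IsFiniteMeasure μ] (f : V → Ω → ℝ) (hf : ∀ i, Measurable (f i))
    (G : DAG V) : Prop :=
  ∀ v : V, CI μ f hf {v} (G.NonDescNonPar v) (G.Parents v)

namespace List

variable {α : Type*}

theorem triple_infix_append_cons {a b c v : α} {l₁ l₂ : List α}
    (h : [a, b, c] <:+: l₁ ++ v :: l₂) :
    [a, b, c] <:+: l₁ ++ [v] ∨ [a, b, c] <:+: v :: l₂ ∨
      b = v ∧ l₁.getLast? = some a ∧ l₂.head? = some c := by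
  induction l₁ with
  | nil => exact .inr (.inl h)
  | cons x l₁ ih =>
    rcases infix_cons_iff.mp h with ⟨t, ht⟩ | hinf
    · rcases l₁ with _ | ⟨y, _ | ⟨z, l₁⟩⟩
      · obtain ⟨rfl, rfl, rfl⟩ := by simpa using ht
        simp
      · simp_all
      · simp only [cons_append, cons.injEq] at ht
        obtain ⟨rfl, rfl, rfl, -⟩ := ht
        exact .inl ⟨[], l₁ ++ [v], by simp⟩
    · rcases ih hinf with h | h | ⟨rfl, hl, hc⟩
      · exact .inl (infix_cons h)
      · exact .inr (.inl h)
      · refine .inr (.inr ⟨rfl, ?_, hc⟩)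
        rcases l₁ with _ | ⟨y, l₁⟩
        · simp at hl
        · simpa [getLast?_cons_cons] using hl

theorem exists_triple_infix_of_mem {b : α} {l : List α} (hb : b ∈ l) (hh : l.head? ≠ some b)
    (hl : l.getLast? ≠ some b) : ∃ a c, [a, b, c] <:+: l := by
  obtain ⟨s, t, rfl⟩ := append_of_mem hb
  obtain ⟨s, a, rfl⟩ := s.eq_nil_or_concat'.resolve_left (by rintro rfl; simp at hh)
  obtain ⟨c, t, rfl⟩ := exists_cons_of_ne_nil (l := t) (by rintro rfl; simp at hl)
  exact ⟨a, c, s, t, by simp⟩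

theorem exists_eq_append_cons_append_cons_of_not_nodup {l : List α} (h : ¬ l.Nodup) :
    ∃ v l₁ m l₂, l = l₁ ++ v :: (m ++ v :: l₂) := by
  obtain ⟨v, hv⟩ : ∃ v, [v, v] <+ l := by simpa [nodup_iff_sublist] using h
  obtain ⟨r₁, r₂, rfl, h₁, h₂⟩ := cons_sublist_iff.1 hv
  obtain ⟨s, t, rfl⟩ := append_of_mem h₁
  obtain ⟨u, w, rfl⟩ := append_of_mem (singleton_sublist.1 h₂)
  exact ⟨v, s, t ++ u, w, by simp⟩

end List

namespace MeasurableSpace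

variable {Ω : Type*}

theorem sup_eq_generateFrom_image2_inter (m₁ m₂ : MeasurableSpace Ω) :
    m₁ ⊔ m₂ =
      generateFrom (Set.image2 (· ∩ ·) {s | MeasurableSet[m₁] s} {s | MeasurableSet[m₂] s}) := by
  refine le_antisymm (sup_le (fun s hs => ?_) fun s hs => ?_) (generateFrom_le ?_)
  · exact measurableSet_generateFrom ⟨s, hs, Set.univ, .univ, Set.inter_univ s⟩
  · exact measurableSet_generateFrom ⟨Set.univ, .univ, s, hs, Set.univ_inter s⟩
  · rintro _ ⟨s, hs, t, ht, rfl⟩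
    exact (le_sup_left (b := m₂) s hs).inter (le_sup_right (a := m₁) t ht)

theorem isPiSystem_image2_inter (m₁ m₂ : MeasurableSpace Ω) :
    IsPiSystem (Set.image2 (· ∩ ·) {s | MeasurableSet[m₁] s} {s | MeasurableSet[m₂] s}) := by
  rintro _ ⟨s, hs, t, ht, rfl⟩ _ ⟨s', hs', t', ht', rfl⟩ -
  exact ⟨s ∩ s', hs.inter hs', t ∩ t', ht.inter ht', Set.inter_inter_inter_comm s s' t t'⟩

end MeasurableSpace

theorem Set.mul_indicator_one_eq {ι M₀ : Type*} [MulZeroOneClass M₀] (f : ι → M₀) (t : Set ι) :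
    f * t.indicator (fun _ => 1) = t.indicator f := by
  ext x; by_cases hx : x ∈ t <;> simp [hx]

theorem MeasureTheory.setIntegral_eq_of_isPiSystem {Ω : Type*} {mΩ : MeasurableSpace Ω}
    {μ : Measure Ω} {m : MeasurableSpace Ω} (hm : m ≤ mΩ) {C : Set (Set Ω)}
    (hC : m = MeasurableSpace.generateFrom C) (hCπ : IsPiSystem C) {f g : Ω → ℝ}
    (hf : Integrable f μ) (hg : Integrable g μ) (huniv : ∫ x, f x ∂μ = ∫ x, g x ∂μ)
    (h : ∀ t ∈ C, ∫ x in t, f x ∂μ = ∫ x in t, g x ∂μ) {t : Set Ω} (ht : MeasurableSet[m] t) :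
    ∫ x in t, f x ∂μ = ∫ x in t, g x ∂μ := by
  induction t, ht using MeasurableSpace.induction_on_inter hC hCπ with
  | empty => simp
  | basic t ht => exact h t ht
  | compl t ht ih =>
    have hf' := integral_add_compl (hm t ht) hf
    have hg' := integral_add_compl (hm t ht) hg
    linarith
  | iUnion s hd hs ih =>
    rw [integral_iUnion (fun i => hm _ (hs i)) hd hf.integrableOn,
      integral_iUnion (fun i => hm _ (hs i)) hd hg.integrableOn]
    exact tsum_congr ih

namespace ProbabilityTheory

variable {Ω : Type*} {mΩ : MeasurableSpace Ω} [StandardBorelSpace Ω] {μ : Measure Ω}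
  [IsFiniteMeasure μ] {m' m₁ m₂ m₃ : MeasurableSpace Ω}

theorem CondIndep.condExp_indicator_sup_eq (hm' : m' ≤ mΩ) (hm₁ : m₁ ≤ mΩ) (hm₂ : m₂ ≤ mΩ)
    (h : CondIndep m' m₁ m₂ hm' μ) {s : Set Ω} (hs : MeasurableSet[m₁] s) :
    μ⟦s | m₂ ⊔ m'⟧ =ᵐ[μ] μ⟦s | m'⟧ := by
  have hsΩ := hm₁ s hs
  have hint : Integrable (s.indicator fun _ => (1 : ℝ)) μ := (integrable_const 1).indicator hsΩ
  refine (ae_eq_condExp_of_forall_setIntegral_eq (sup_le hm₂ hm') hint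
    (fun _ _ _ => integrable_condExp.integrableOn) (fun t ht _ => ?_)
    (stronglyMeasurable_condExp.mono le_sup_right).aestronglyMeasurable).symm
  refine setIntegral_eq_of_isPiSystem (sup_le hm₂ hm')
    (MeasurableSpace.sup_eq_generateFrom_image2_inter m₂ m')
    (MeasurableSpace.isPiSystem_image2_inter m₂ m') integrable_condExp hint
    (integral_condExp hm') ?_ ht
  rintro _ ⟨t₂, ht₂, t', ht', rfl⟩
  have ht₂Ω := hm₂ t₂ ht₂
  have hprod : μ[t₂.indicator (μ⟦s | m'⟧) | m'] =ᵐ[μ] μ⟦s ∩ t₂ | m'⟧ := by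
    rw [← Set.mul_indicator_one_eq]
    refine (condExp_mul_of_stronglyMeasurable_left stronglyMeasurable_condExp
      (by rw [Set.mul_indicator_one_eq]; exact integrable_condExp.indicator ht₂Ω)
      ((integrable_const 1).indicator ht₂Ω)).trans ?_
    exact (((condIndep_iff m' m₁ m₂ hm' hm₁ hm₂ μ).1 h s t₂ hs ht₂)).symm
  calc ∫ x in t₂ ∩ t', (μ⟦s | m'⟧) x ∂μ
      = ∫ x in t', t₂.indicator (μ⟦s | m'⟧) x ∂μ := by
        rw [setIntegral_indicator ht₂Ω, Set.inter_comm]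
    _ = ∫ x in t', (μ[t₂.indicator (μ⟦s | m'⟧) | m']) x ∂μ :=
        (setIntegral_condExp hm' (integrable_condExp.indicator ht₂Ω) ht').symm
    _ = ∫ x in t', (μ⟦s ∩ t₂ | m'⟧) x ∂μ :=
        setIntegral_congr_ae (hm' t' ht') (hprod.mono fun _ hx _ => hx)
    _ = ∫ x in t', (s ∩ t₂).indicator (fun _ => (1 : ℝ)) x ∂μ :=
        setIntegral_condExp hm' ((integrable_const 1).indicator (hsΩ.inter ht₂Ω)) ht'
    _ = ∫ x in t₂ ∩ t', s.indicator (fun _ => (1 : ℝ)) x ∂μ := by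
        rw [Set.inter_comm s, ← Set.indicator_indicator, setIntegral_indicator ht₂Ω, Set.inter_comm]

theorem condIndep_of_condExp_indicator_sup_eq (hm' : m' ≤ mΩ) (hm₁ : m₁ ≤ mΩ) (hm₂ : m₂ ≤ mΩ)
    (h : ∀ s, MeasurableSet[m₁] s → μ⟦s | m₂ ⊔ m'⟧ =ᵐ[μ] μ⟦s | m'⟧) :
    CondIndep m' m₁ m₂ hm' μ := by
  refine (condIndep_iff m' m₁ m₂ hm' hm₁ hm₂ μ).2 fun t₁ t₂ ht₁ ht₂ => ?_
  have hsup := sup_le hm₂ hm'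
  have hint : ∀ t, MeasurableSet[mΩ] t → Integrable (t.indicator fun _ => (1 : ℝ)) μ :=
    fun t ht => (integrable_const 1).indicator ht
  have hinter : (t₁ ∩ t₂).indicator (fun _ => (1 : ℝ)) =
      t₂.indicator (fun _ => 1) * t₁.indicator fun _ => 1 := by
    rw [Set.inter_comm]; exact Set.inter_indicator_one
  calc μ⟦t₁ ∩ t₂ | m'⟧
      =ᵐ[μ] μ[μ⟦t₁ ∩ t₂ | m₂ ⊔ m'⟧ | m'] := (condExp_condExp_of_le le_sup_right hsup).symm
    _ =ᵐ[μ] μ[t₂.indicator (fun _ => 1) * μ⟦t₁ | m'⟧ | m'] := by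
      refine condExp_congr_ae ?_
      rw [hinter]
      refine (condExp_mul_of_stronglyMeasurable_left
        ((stronglyMeasurable_const.indicator ht₂).mono (le_sup_left : m₂ ≤ m₂ ⊔ m'))
        (hinter ▸ hint _ ((hm₁ _ ht₁).inter (hm₂ _ ht₂))) (hint _ (hm₁ _ ht₁))).trans ?_
      exact (h t₁ ht₁).mono fun x hx => by simp only [Pi.mul_apply, hx]
    _ =ᵐ[μ] μ⟦t₁ | m'⟧ * μ⟦t₂ | m'⟧ := by
      rw [mul_comm]
      exact condExp_mul_of_stronglyMeasurable_left stronglyMeasurable_condExp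
        (by rw [Set.mul_indicator_one_eq]; exact integrable_condExp.indicator (hm₂ _ ht₂))
        (hint _ (hm₂ _ ht₂))

theorem condIndep_iff_condExp_indicator_sup_eq (hm' : m' ≤ mΩ) (hm₁ : m₁ ≤ mΩ) (hm₂ : m₂ ≤ mΩ) :
    CondIndep m' m₁ m₂ hm' μ ↔ ∀ s, MeasurableSet[m₁] s → μ⟦s | m₂ ⊔ m'⟧ =ᵐ[μ] μ⟦s | m'⟧ :=
  ⟨fun h _ hs => h.condExp_indicator_sup_eq hm' hm₁ hm₂ hs,
    condIndep_of_condExp_indicator_sup_eq hm' hm₁ hm₂⟩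

theorem CondIndep.weak_union (hm' : m' ≤ mΩ) (hm₁ : m₁ ≤ mΩ) (hm₂ : m₂ ≤ mΩ) (hm₃ : m₃ ≤ mΩ)
    (h : CondIndep m' m₁ (m₂ ⊔ m₃) hm' μ) : CondIndep (m₃ ⊔ m') m₁ m₂ (sup_le hm₃ hm') μ := by
  rw [condIndep_iff_condExp_indicator_sup_eq hm' hm₁ (sup_le hm₂ hm₃)] at h
  refine condIndep_of_condExp_indicator_sup_eq _ hm₁ hm₂ fun s hs => ?_
  have h₃ : μ⟦s | m₃ ⊔ m'⟧ =ᵐ[μ] μ⟦s | m'⟧ :=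
    calc μ⟦s | m₃ ⊔ m'⟧
        =ᵐ[μ] μ[μ⟦s | m₂ ⊔ m₃ ⊔ m'⟧ | m₃ ⊔ m'] :=
          (condExp_condExp_of_le (sup_le_sup_right le_sup_right m')
            (sup_le (sup_le hm₂ hm₃) hm')).symm
      _ =ᵐ[μ] μ[μ⟦s | m'⟧ | m₃ ⊔ m'] := condExp_congr_ae (h s hs)
      _ = μ⟦s | m'⟧ := condExp_of_stronglyMeasurable (sup_le hm₃ hm')
          (stronglyMeasurable_condExp.mono le_sup_right) integrable_condExp
  rw [← sup_assoc]
  exact (h s hs).trans h₃.symm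

theorem CondIndep.contraction (hm' : m' ≤ mΩ) (hm₁ : m₁ ≤ mΩ) (hm₂ : m₂ ≤ mΩ) (hm₃ : m₃ ≤ mΩ)
    (h₁ : CondIndep m' m₁ m₂ hm' μ) (h₂ : CondIndep (m₂ ⊔ m') m₁ m₃ (sup_le hm₂ hm') μ) :
    CondIndep m' m₁ (m₂ ⊔ m₃) hm' μ := by
  rw [condIndep_iff_condExp_indicator_sup_eq hm' hm₁ hm₂] at h₁
  rw [condIndep_iff_condExp_indicator_sup_eq _ hm₁ hm₃] at h₂
  refine condIndep_of_condExp_indicator_sup_eq hm' hm₁ (sup_le hm₂ hm₃) fun s hs => ?_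
  rw [show m₂ ⊔ m₃ ⊔ m' = m₃ ⊔ (m₂ ⊔ m') by ac_rfl]
  exact (h₂ s hs).trans (h₁ s hs)

end ProbabilityTheory

theorem genFrom_mono {Ω V : Type*} (f : V → Ω → ℝ) {A B : Set V} (h : A ⊆ B) :
    genFrom f A ≤ genFrom f B :=
  biSup_mono h

theorem genFrom_union {Ω V : Type*} (f : V → Ω → ℝ) (A B : Set V) :
    genFrom f (A ∪ B) = genFrom f A ⊔ genFrom f B :=
  iSup_union

section CI

variable {Ω V : Type*} [mΩ : MeasurableSpace Ω] [StandardBorelSpace Ω] {μ : Measure Ω}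
  [IsFiniteMeasure μ] {f : V → Ω → ℝ} {hf : ∀ i, Measurable (f i)} {A B C D : Set V}

theorem CI.symm (h : CI μ f hf A B C) : CI μ f hf B A C :=
  CondIndep.symm h

theorem CI.mono_right (h : CI μ f hf A B C) (hD : D ⊆ B) : CI μ f hf A D C :=
  condIndep_of_condIndep_of_le_right h (genFrom_mono f hD)

theorem CI.weak_union (h : CI μ f hf A (B ∪ D) C) : CI μ f hf A B (C ∪ D) := by
  unfold CI at h ⊢
  rw [genFrom_union] at h
  convert h.weak_union _ (genFrom_le f hf A) (genFrom_le f hf B) (genFrom_le f hf D) using 1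
  rw [genFrom_union, sup_comm]

theorem CI.contraction (h₁ : CI μ f hf A B C) (h₂ : CI μ f hf A D (B ∪ C)) :
    CI μ f hf A (B ∪ D) C := by
  unfold CI at h₁ h₂ ⊢
  rw [genFrom_union]
  refine h₁.contraction _ (genFrom_le f hf A) (genFrom_le f hf B) (genFrom_le f hf D) ?_
  convert h₂ using 1
  rw [genFrom_union]

theorem CI_empty_left (B C : Set V) : CI μ f hf ∅ B C := by
  rw [CI, show genFrom f ∅ = ⊥ by simp [genFrom]]
  exact condIndep_bot_left _

end CI

namespace DAG

variable {V : Type*} (G : DAG V)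

def restrict (W : Set V) : DAG V where
  Edge x y := G.Edge x y ∧ x ∈ W ∧ y ∈ W
  acyclic x h := G.acyclic x (Relation.TransGen.mono (fun _ _ e => e.1) x x h)

def IsAncestral (W : Set V) : Prop := ∀ ⦃u v⦄, G.Edge u v → v ∈ W → u ∈ W

def IsSinkOf (W : Set V) (w : V) : Prop := w ∈ W ∧ ∀ u ∈ W, ¬ G.Edge w u

def IsCollider (a b c : V) : Prop := G.Edge a b ∧ G.Edge c b

def Transmits (S : Set V) (a b c : V) : Prop :=
  (G.IsCollider a b c → ∃ d ∈ S, G.Desc b d) ∧ (¬ G.IsCollider a b c → b ∉ S)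

/-- Walks rather than paths, so that they concatenate freely; `DConnected.exists_activePath`
shortens them back to active paths. -/
def IsDConnWalk (S : Set V) (p : List V) : Prop :=
  p.IsChain G.Adj ∧ ∀ ⦃a b c⦄, [a, b, c] <:+: p → G.Transmits S a b c

def DConnected (S : Set V) (x y : V) : Prop :=
  ∃ p, G.IsDConnWalk S p ∧ p.head? = some x ∧ p.getLast? = some y

def DSeparated (A B S : Set V) : Prop := ∀ x ∈ A, ∀ y ∈ B, ¬ G.DConnected S x y

variable {G} {S : Set V}

theorem not_edge_self (v : V) : ¬ G.Edge v v :=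
  fun h => G.acyclic v (.single h)

theorem Edge.asymm {u v : V} (h : G.Edge u v) : ¬ G.Edge v u :=
  fun h' => G.acyclic u (.tail (.single h) h')

theorem Transmits.symm {a b c : V} (h : G.Transmits S a b c) : G.Transmits S c b a := by
  simpa only [Transmits, IsCollider, and_comm] using h

theorem transmits_of_not_edge {a b c : V} (hb : b ∉ S) (h : ¬ G.Edge c b) :
    G.Transmits S a b c :=
  ⟨fun hcol => absurd hcol.2 h, fun _ => hb⟩

theorem transmits_of_collider {a b c : V} (hab : G.Edge a b) (hcb : G.Edge c b)
    (hb : ∃ d ∈ S, G.Desc b d) : G.Transmits S a b c :=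
  ⟨fun _ => hb, fun h => absurd ⟨hab, hcb⟩ h⟩

variable {p q : List V}

theorem IsDConnWalk.singleton (x : V) : G.IsDConnWalk S [x] :=
  ⟨.singleton x, fun a b c h => absurd h.length_le (by simp)⟩

theorem IsDConnWalk.pair {x y : V} (h : G.Adj x y) : G.IsDConnWalk S [x, y] :=
  ⟨.cons_cons h (.singleton y), fun a b c h => absurd h.length_le (by simp)⟩

theorem IsDConnWalk.infix (hp : G.IsDConnWalk S p) (hq : q <:+: p) : G.IsDConnWalk S q :=
  ⟨hp.1.infix hq, fun _ _ _ h => hp.2 (h.trans hq)⟩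

theorem IsDConnWalk.reverse (hp : G.IsDConnWalk S p) : G.IsDConnWalk S p.reverse :=
  ⟨List.isChain_reverse.2 (hp.1.imp fun _ _ h => h.symm), fun a b c h =>
    (hp.2 (by simpa using List.reverse_infix.2 h)).symm⟩

theorem IsDConnWalk.append {l₁ l₂ : List V} {v : V} (h₁ : G.IsDConnWalk S (l₁ ++ [v]))
    (h₂ : G.IsDConnWalk S (v :: l₂))
    (hv : ∀ a c, l₁.getLast? = some a → l₂.head? = some c → G.Transmits S a v c) :
    G.IsDConnWalk S (l₁ ++ v :: l₂) := by
  refine ⟨List.isChain_split.2 ⟨h₁.1, h₂.1⟩, fun a b c h => ?_⟩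
  rcases List.triple_infix_append_cons h with h | h | ⟨rfl, ha, hc⟩
  exacts [h₁.2 h, h₂.2 h, hv a c ha hc]

theorem IsDConnWalk.adj {a b : V} (hp : G.IsDConnWalk S p) (h : [a, b] <:+: p) : G.Adj a b :=
  List.isChain_pair.1 (hp.1.infix h)

/-- The first collider met along the walk is a descendant of `x`. -/
theorem IsDConnWalk.desc_or_transGen {x e y : V} {l : List V}
    (hp : G.IsDConnWalk S (x :: e :: l)) (he : G.Edge x e) (hy : (e :: l).getLast? = some y) :
    (∃ d ∈ S, G.Desc x d) ∨ Relation.TransGen G.Edge x y := by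
  induction l generalizing x e with
  | nil => exact .inr (.single (Option.some.inj hy ▸ he))
  | cons c l ih =>
    rcases hp.adj ⟨[x], l, rfl⟩ with hec | hce
    · rcases ih (hp.infix (List.suffix_cons _ _).isInfix) hec (by simpa using hy) with
        ⟨d, hd, hed⟩ | h
      · exact .inl ⟨d, hd, .head he hed⟩
      · exact .inr (.head he h)
    · obtain ⟨d, hd, hed⟩ := (hp.2 ⟨[], l, rfl⟩).1 ⟨he, hce⟩
      exact .inl ⟨d, hd, .head he hed⟩

theorem IsDConnWalk.shortcut {l₁ m l₂ : List V} {v : V}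
    (hp : G.IsDConnWalk S (l₁ ++ v :: (m ++ v :: l₂))) : G.IsDConnWalk S (l₁ ++ v :: l₂) := by
  refine .append (hp.infix ⟨[], m ++ v :: l₂, by simp⟩) (hp.infix ⟨l₁ ++ v :: m, [], by simp⟩) ?_
  intro a c ha hc
  obtain ⟨l₁, rfl⟩ := List.getLast?_eq_some_iff.1 ha
  obtain ⟨l₂, rfl⟩ : ∃ l₂', l₂ = c :: l₂' := by cases l₂ <;> simp_all
  obtain ⟨e, m, rfl⟩ : ∃ e m', m = e :: m' := by
    rcases m with _ | ⟨e, m⟩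
    · exact absurd (hp.adj ⟨l₁ ++ [a], c :: l₂, by simp⟩) fun h => h.elim (not_edge_self v)
        (not_edge_self v)
    · exact ⟨e, m, rfl⟩
  obtain ⟨init, u, hu⟩ := (v :: e :: m).eq_nil_or_concat'.resolve_left (List.cons_ne_nil _ _)
  -- The new triple `a, v, c` is justified by the triples at the two occurrences of `v` and by the
  -- loop `v, e, …, v`, which cannot be a directed cycle.
  have hT₁ : G.Transmits S a v e := hp.2 ⟨l₁, m ++ v :: c :: l₂, by simp⟩
  have hT₂ : G.Transmits S u v c := hp.2 ⟨l₁ ++ [a] ++ init, l₂, by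
    rw [show v :: (e :: m ++ v :: c :: l₂) = (v :: e :: m) ++ v :: c :: l₂ by simp, hu]
    simp⟩
  have hloop : G.Edge v e → ∃ d ∈ S, G.Desc v d := fun hve =>
    ((hp.infix (q := v :: e :: (m ++ [v])) ⟨l₁ ++ [a], c :: l₂, by simp⟩).desc_or_transGen hve
      (List.getLast?_eq_some_iff.2 ⟨e :: m, rfl⟩)).resolve_right (G.acyclic v)
  constructor
  · rintro ⟨hav, hcv⟩
    by_cases hev : G.Edge e v
    · exact hT₁.1 ⟨hav, hev⟩
    · exact hloop ((hp.adj ⟨l₁ ++ [a], m ++ v :: c :: l₂, by simp⟩).resolve_right hev)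
  · intro hnc
    by_cases hav : G.Edge a v
    · exact hT₂.2 fun h => hnc ⟨hav, h.2⟩
    · exact hT₁.2 fun h => hav h.1

theorem IsDConnWalk.activePath_of_nodup {x y : V} (hp : G.IsDConnWalk S p) (hnd : p.Nodup)
    (hx : p.head? = some x) (hy : p.getLast? = some y) (hxy : x ≠ y) : G.ActivePath p x y S := by
  refine ⟨hnd, ?_, hp.1, hx, hy, fun b hb => ?_⟩
  · match p, hx, hy with
    | [_], hx, hy => exact absurd ((Option.some.inj hx).symm.trans (Option.some.inj hy)) hxy
    | _ :: _ :: _, _, _ => simp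
  by_cases hbx : b = x
  · exact .inl hbx
  by_cases hby : b = y
  · exact .inr (.inl hby)
  obtain ⟨a, c, habc⟩ := List.exists_triple_infix_of_mem hb (by simpa [hx] using Ne.symm hbx)
    (by simpa [hy] using Ne.symm hby)
  by_cases hcol : G.ColliderOn p b
  · obtain ⟨a', c', h, hcol'⟩ := hcol
    exact .inr (.inr (.inr ⟨⟨a', c', h, hcol'⟩, (hp.2 h).1 hcol'⟩))
  · exact .inr (.inr (.inl ⟨hcol, (hp.2 habc).2 fun h => hcol ⟨a, c, habc, h⟩⟩))

namespace DConnected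

variable {x y : V}

theorem refl (x : V) : G.DConnected S x x := ⟨[x], .singleton x, rfl, rfl⟩

theorem symm (h : G.DConnected S x y) : G.DConnected S y x :=
  let ⟨p, hp, hx, hy⟩ := h
  ⟨p.reverse, hp.reverse, by simpa using hy, by simpa using hx⟩

theorem snoc {u w : V} (h : G.DConnected S x u) (hu : u ∉ S) (e : G.Edge u w) :
    G.DConnected S x w := by
  obtain ⟨p, hp, hx, hpu⟩ := h
  obtain ⟨l, rfl⟩ := List.getLast?_eq_some_iff.1 hpu
  refine ⟨l ++ [u, w], hp.append (.pair (.inl e)) ?_, by cases l <;> simp_all, by simp⟩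
  intro a c _ hc
  obtain rfl : w = c := Option.some.inj hc
  exact transmits_of_not_edge hu e.asymm

theorem collider {q q' w : V} (h : G.DConnected S x q) (h' : G.DConnected S y q')
    (hq : q ∉ S) (hq' : q' ∉ S) (e : G.Edge q w) (e' : G.Edge q' w)
    (hw : ∃ d ∈ S, G.Desc w d) : G.DConnected S x y := by
  obtain ⟨p, hp, hx, hpq⟩ := h
  obtain ⟨r, hr, hrq', hy⟩ := h'.symm
  obtain ⟨l, rfl⟩ := List.getLast?_eq_some_iff.1 hpq
  obtain ⟨m, rfl⟩ : ∃ m, r = q' :: m := by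
    cases r <;> simp_all
  have hwr : G.IsDConnWalk S (w :: q' :: m) :=
    IsDConnWalk.append (l₁ := [w]) (.pair (.inr e')) hr fun _ _ h _ =>
      Option.some.inj h ▸ (transmits_of_not_edge hq' e'.asymm).symm
  have hqr : G.IsDConnWalk S (q :: w :: q' :: m) :=
    IsDConnWalk.append (l₁ := [q]) (.pair (.inl e)) hwr fun _ _ ha hc => by
      obtain ⟨rfl, rfl⟩ := And.intro (Option.some.inj ha) (Option.some.inj hc)
      exact transmits_of_collider e e' hw
  refine ⟨l ++ q :: w :: q' :: m, hp.append hqr ?_, by cases l <;> simp_all, by simp_all⟩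
  intro a c _ hc
  obtain rfl : w = c := Option.some.inj hc
  exact transmits_of_not_edge hq e.asymm

theorem exists_activePath (h : G.DConnected S x y) (hxy : x ≠ y) :
    ∃ p, G.ActivePath p x y S := by
  obtain ⟨p, hp, hx, hy⟩ := h
  induction hn : p.length using Nat.strong_induction_on generalizing p with
  | _ n ih =>
  by_cases hnd : p.Nodup
  · exact ⟨p, hp.activePath_of_nodup hnd hx hy hxy⟩
  obtain ⟨v, l₁, m, l₂, rfl⟩ := List.exists_eq_append_cons_append_cons_of_not_nodup hnd
  refine ih _ (by simp [← hn]) _ hp.shortcut ?_ ?_ rfl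
  · cases l₁ <;> simp_all
  · rw [← hy]
    simp [List.getLast?_cons, List.getLast?_append]

end DConnected

variable (G) in
theorem restrict_univ : G.restrict Set.univ = G := by
  cases G
  simp [restrict]

theorem restrict_edge_mono {W W' : Set V} (hW : W' ⊆ W) {x y : V}
    (h : (G.restrict W').Edge x y) : (G.restrict W).Edge x y :=
  ⟨h.1, hW h.2.1, hW h.2.2⟩

theorem restrict_adj_mem {W : Set V} {x y : V} (h : (G.restrict W).Adj x y) : x ∈ W ∧ y ∈ W :=
  h.elim (fun h => h.2) fun h => h.2.symm

theorem DConnected.restrict_mono {W W' S' : Set V} {x y : V} (hW : W' ⊆ W) (hS : S' ⊆ S)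
    (hSW : S ∩ W' ⊆ S') (h : (G.restrict W').DConnected S' x y) :
    (G.restrict W).DConnected S x y := by
  obtain ⟨p, hp, hx, hy⟩ := h
  refine ⟨p, ⟨hp.1.imp fun a b h => h.imp (restrict_edge_mono hW) (restrict_edge_mono hW),
    fun a b c habc => ?_⟩, hx, hy⟩
  obtain ⟨ha, hb⟩ := restrict_adj_mem (hp.adj ((List.infix_append [] [a, b] [c]).trans habc))
  obtain ⟨-, hc⟩ := restrict_adj_mem (hp.adj ((List.infix_append [a] [b, c] []).trans habc))
  have hcol : (G.restrict W).IsCollider a b c ↔ (G.restrict W').IsCollider a b c := by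
    simp [IsCollider, restrict, ha, hb, hc, hW ha, hW hb, hW hc]
  obtain ⟨hT₁, hT₂⟩ := hp.2 habc
  refine ⟨fun h => ?_, fun h hbS => hT₂ (mt hcol.2 h) (hSW ⟨hbS, hb⟩)⟩
  obtain ⟨d, hd, hbd⟩ := hT₁ (hcol.1 h)
  exact ⟨d, hS hd, Relation.ReflTransGen.mono (fun _ _ => restrict_edge_mono hW) _ _ hbd⟩

theorem IsAncestral.mem_of_desc {W : Set V} (hW : G.IsAncestral W) {u v : V} (h : G.Desc u v)
    (hv : v ∈ W) : u ∈ W := by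
  induction h using Relation.ReflTransGen.head_induction_on with
  | refl => exact hv
  | head e _ ih => exact hW e ih

theorem IsSinkOf.not_desc {W : Set V} {w u : V} (hw : G.IsSinkOf W w) (hW : G.IsAncestral W)
    (hu : u ∈ W) (hne : u ≠ w) : ¬ G.Desc w u := fun h => by
  rcases h.cases_head with rfl | ⟨c, e, hc⟩
  exacts [hne rfl, hw.2 c (hW.mem_of_desc hc hu) e]

theorem IsAncestral.sdiff_sink {W : Set V} {w : V} (hW : G.IsAncestral W) (hw : G.IsSinkOf W w) :
    G.IsAncestral (W \ {w}) := fun u v e hv =>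
  ⟨hW e hv.1, by rintro rfl; exact hw.2 v hv.1 e⟩

theorem exists_isSinkOf [Finite V] {W : Set V} (hW : W.Nonempty) : ∃ w, G.IsSinkOf W w := by
  let r : V → V → Prop := fun u w => Relation.TransGen G.Edge w u
  have : IsTrans V r := ⟨fun _ _ _ h₁ h₂ => h₂.trans h₁⟩
  have : Std.Irrefl r := ⟨G.acyclic⟩
  obtain ⟨w, hw, hmin⟩ := (Finite.wellFounded_of_trans_of_irrefl r).has_min W hW
  exact ⟨w, hw, fun u hu e => hmin u hu (.single e)⟩

end DAG

namespace DAG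

variable {V Ω : Type*} [mΩ : MeasurableSpace Ω] [StandardBorelSpace Ω] {μ : Measure Ω}
  [IsFiniteMeasure μ] {G : DAG V} {f : V → Ω → ℝ} {hf : ∀ i, Measurable (f i)}
  {W A B S : Set V} {w : V}

theorem DSeparated.symm (h : G.DSeparated A B S) : G.DSeparated B A S :=
  fun y hy x hx hyx => h x hx y hy hyx.symm

/-- Otherwise `w ∈ S` would be a collider joining the two walks. -/
theorem DSeparated.not_dConnected_parents (hsep : (G.restrict W).DSeparated A B S)
    (hW : G.IsAncestral W) (hwW : w ∈ W) (hwS : w ∈ S) {a b q q' : V} (ha : a ∈ A) (hb : b ∈ B)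
    (hq : q ∈ G.Parents w \ S) (hq' : q' ∈ G.Parents w \ S)
    (haq : (G.restrict (W \ {w})).DConnected (S \ {w}) a q) :
    ¬ (G.restrict (W \ {w})).DConnected (S \ {w}) b q' := fun hbq' => by
  have hmono : S ∩ (W \ {w}) ⊆ S \ {w} := fun v hv => ⟨hv.1, hv.2.2⟩
  exact hsep a ha b hb <|
    (haq.restrict_mono Set.sdiff_subset Set.sdiff_subset hmono).collider
      (hbq'.restrict_mono Set.sdiff_subset Set.sdiff_subset hmono) hq.2 hq'.2
      ⟨hq.1, hW hq.1 hwW, hwW⟩ ⟨hq'.1, hW hq'.1 hwW, hwW⟩ ⟨w, hwS, .refl⟩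

theorem _root_.LocalMarkov.CI_sink (hM : LocalMarkov μ f hf G) (hW : G.IsAncestral W)
    (hw : G.IsSinkOf W w) {B C : Set V} (hB : B ⊆ W \ {w}) (hC : C ⊆ W \ {w})
    (hBw : Disjoint B (G.Parents w)) (hwC : G.Parents w ⊆ C) : CI μ f hf {w} B C := by
  have hnd : B ∪ (C \ G.Parents w) ⊆ G.NonDescNonPar w := by
    rintro u (hu | hu)
    · exact ⟨hw.not_desc hW (hB hu).1 (hB hu).2, hBw.notMem_of_mem_left hu⟩
    · exact ⟨hw.not_desc hW (hC hu.1).1 (hC hu.1).2, hu.2⟩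
  have := ((hM w).mono_right hnd).weak_union
  rwa [Set.union_sdiff_cancel hwC] at this

def GlobalMarkovOn (μ : Measure Ω) [IsFiniteMeasure μ] (f : V → Ω → ℝ)
    (hf : ∀ i, Measurable (f i)) (G : DAG V) (W : Set V) : Prop :=
  ∀ ⦃A B S : Set V⦄, A ⊆ W → B ⊆ W → S ⊆ W → Disjoint A B → Disjoint A S → Disjoint B S →
    (G.restrict W).DSeparated A B S → CI μ f hf A B S

theorem GlobalMarkovOn.CI_of_sink_mem_left (IH : GlobalMarkovOn μ f hf G (W \ {w}))
    (hM : LocalMarkov μ f hf G) (hW : G.IsAncestral W) (hw : G.IsSinkOf W w) (hA : A ⊆ W)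
    (hB : B ⊆ W) (hS : S ⊆ W) (hAB : Disjoint A B) (hAS : Disjoint A S) (hBS : Disjoint B S)
    (hwA : w ∈ A) (hsep : (G.restrict W).DSeparated A B S) : CI μ f hf A B S := by
  have hwB : w ∉ B := hAB.notMem_of_mem_left hwA
  have hwS : w ∉ S := hAS.notMem_of_mem_left hwA
  have hmono : S ∩ (W \ {w}) ⊆ S := Set.inter_subset_left
  have hBP : Disjoint B (G.Parents w) := Set.disjoint_left.2 fun b hb e =>
    hsep w hwA b hb ((DConnected.refl (G := G.restrict W) b).snoc (hBS.notMem_of_mem_left hb)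
      ⟨e, hB hb, hw.1⟩).symm
  set C := (G.Parents w \ S) ∪ (A \ {w})
  have hCW : C ⊆ W \ {w} := by
    rintro x (hx | hx)
    exacts [⟨hW hx.1 hw.1, fun h => not_edge_self w (h ▸ hx.1)⟩, ⟨hA hx.1, hx.2⟩]
  have hsepC : (G.restrict (W \ {w})).DSeparated C B S := by
    rintro x (hx | hx) y hy hxy
    · exact hsep w hwA y hy
        ((hxy.restrict_mono Set.sdiff_subset subset_rfl hmono).symm.snoc hx.2
          ⟨hx.1, hW hx.1 hw.1, hw.1⟩).symm
    · exact hsep x hx.1 y hy (hxy.restrict_mono Set.sdiff_subset subset_rfl hmono)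
  have hCB : CI μ f hf B C S := (IH hCW (Set.subset_sdiff_singleton hB hwB)
    (Set.subset_sdiff_singleton hS hwS)
    (Set.disjoint_union_left.2
      ⟨hBP.symm.mono_left Set.sdiff_subset, hAB.mono_left Set.sdiff_subset⟩)
    (Set.disjoint_union_left.2 ⟨Set.disjoint_sdiff_left, hAS.mono_left Set.sdiff_subset⟩)
    hBS hsepC).symm
  have hMw : CI μ f hf B {w} (C ∪ S) := (hM.CI_sink hW hw
    (Set.subset_sdiff_singleton hB hwB) (Set.union_subset hCW (Set.subset_sdiff_singleton hS hwS))
    hBP fun q hq => (em (q ∈ S)).elim .inr fun h => .inl (.inl ⟨hq, h⟩)).symm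
  exact ((hCB.contraction hMw).mono_right
    fun a ha => (em (a = w)).elim .inr fun h => .inl (.inr ⟨ha, h⟩)).symm

theorem GlobalMarkovOn.CI_of_sink_mem_cond (IH : GlobalMarkovOn μ f hf G (W \ {w}))
    (hM : LocalMarkov μ f hf G) (hW : G.IsAncestral W) (hw : G.IsSinkOf W w) (hA : A ⊆ W)
    (hB : B ⊆ W) (hS : S ⊆ W) (hAB : Disjoint A B) (hAS : Disjoint A S) (hBS : Disjoint B S)
    (hwS : w ∈ S) (hsep : (G.restrict W).DSeparated A B S)
    (hBw : ∀ q ∈ G.Parents w \ S, ∀ b ∈ B, ¬ (G.restrict (W \ {w})).DConnected (S \ {w}) b q) :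
    CI μ f hf A B S := by
  have hwA : w ∉ A := hAS.notMem_of_mem_right hwS
  have hwB : w ∉ B := hBS.notMem_of_mem_right hwS
  have hBP : Disjoint B (G.Parents w) := Set.disjoint_left.2 fun b hb e =>
    hBw b ⟨e, hBS.notMem_of_mem_left hb⟩ b hb (.refl b)
  set C := A ∪ (G.Parents w \ S)
  have hCW : C ⊆ W \ {w} := by
    rintro x (hx | hx)
    exacts [⟨hA hx, fun h => hwA (h ▸ hx)⟩, ⟨hW hx.1 hw.1, fun h => not_edge_self w (h ▸ hx.1)⟩]
  have hsepC : (G.restrict (W \ {w})).DSeparated C B (S \ {w}) := by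
    rintro x (hx | hx) y hy hxy
    · exact hsep x hx y hy
        (hxy.restrict_mono Set.sdiff_subset Set.sdiff_subset fun v hv => ⟨hv.1, hv.2.2⟩)
    · exact hBw x hx y hy hxy.symm
  have hCB : CI μ f hf B C (S \ {w}) := (IH hCW (Set.subset_sdiff_singleton hB hwB)
    (Set.sdiff_subset_sdiff_left hS)
    (Set.disjoint_union_left.2 ⟨hAB, hBP.symm.mono_left Set.sdiff_subset⟩)
    (Set.disjoint_union_left.2 ⟨hAS.mono_right Set.sdiff_subset,
      Set.disjoint_sdiff_left.mono_right Set.sdiff_subset⟩)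
    (hBS.mono_right Set.sdiff_subset) hsepC).symm
  have hMw : CI μ f hf B {w} (C ∪ S \ {w}) := (hM.CI_sink hW hw
    (Set.subset_sdiff_singleton hB hwB) (Set.union_subset hCW (Set.sdiff_subset_sdiff_left hS))
    hBP fun q hq => (em (q ∈ S)).elim (fun h => .inr ⟨h, fun h' => not_edge_self w (h' ▸ hq)⟩)
      fun h => .inl (.inr ⟨hq, h⟩)).symm
  have := (hCB.contraction hMw).weak_union
  rw [Set.sdiff_union_of_subset (Set.singleton_subset_iff.2 hwS)] at this
  exact (this.mono_right Set.subset_union_left).symm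

theorem globalMarkovOn [Finite V] (hM : LocalMarkov μ f hf G) (hW : G.IsAncestral W) :
    GlobalMarkovOn μ f hf G W := by
  induction W using WellFoundedLT.induction with
  | _ W ih =>
  intro A B S hA hB hS hAB hAS hBS hsep
  rcases W.eq_empty_or_nonempty with rfl | hne
  · rw [Set.subset_empty_iff.1 hA]
    exact CI_empty_left B S
  obtain ⟨w, hw⟩ := G.exists_isSinkOf hne
  have IH : GlobalMarkovOn μ f hf G (W \ {w}) :=
    ih _ (Set.sdiff_singleton_ssubset.2 hw.1) (hW.sdiff_sink hw)
  by_cases hwA : w ∈ A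
  · exact IH.CI_of_sink_mem_left hM hW hw hA hB hS hAB hAS hBS hwA hsep
  by_cases hwB : w ∈ B
  · exact (IH.CI_of_sink_mem_left hM hW hw hB hA hS hAB.symm hBS hAS hwB hsep.symm).symm
  by_cases hwS : w ∈ S
  · by_cases hAw : ∃ q ∈ G.Parents w \ S, ∃ a ∈ A,
        (G.restrict (W \ {w})).DConnected (S \ {w}) a q
    · obtain ⟨q, hq, a, ha, haq⟩ := hAw
      exact IH.CI_of_sink_mem_cond hM hW hw hA hB hS hAB hAS hBS hwS hsep
        fun q' hq' b hb => hsep.not_dConnected_parents hW hw.1 hwS ha hb hq hq' haq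
    · push Not at hAw
      exact (IH.CI_of_sink_mem_cond hM hW hw hB hA hS hAB.symm hBS hAS hwS hsep.symm
        hAw).symm
  · exact IH (Set.subset_sdiff_singleton hA hwA) (Set.subset_sdiff_singleton hB hwB)
      (Set.subset_sdiff_singleton hS hwS) hAB hAS hBS fun x hx y hy hxy =>
        hsep x hx y hy (hxy.restrict_mono Set.sdiff_subset subset_rfl Set.inter_subset_left)

end DAG

theorem dsep_implies_condIndep_general
    {V : Type*} [Fintype V]
    {Ω : Type*} [mΩ : MeasurableSpace Ω] [StandardBorelSpace Ω]
    (μ : Measure Ω) [IsProbabilityMeasure μ]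
    (G : DAG V) (f : V → Ω → ℝ) (hf : ∀ i, Measurable (f i))
    (hMarkov : LocalMarkov μ f hf G)
    (X Y : V) (Z : Set V) (hXY : X ≠ Y) (hXZ : X ∉ Z) (hYZ : Y ∉ Z)
    (hsep : G.DSep X Y Z) :
    CI μ f hf {X} {Y} Z := by
  have hsep' : (G.restrict Set.univ).DSeparated {X} {Y} Z := by
    rw [DAG.restrict_univ]
    rintro x rfl y rfl hxy
    exact hsep (hxy.exists_activePath hXY)
  exact DAG.globalMarkovOn hMarkov (fun _ _ _ _ => trivial) (Set.subset_univ _)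
    (Set.subset_univ _) (Set.subset_univ _) (Set.disjoint_singleton.2 hXY)
    (Set.disjoint_singleton_left.2 hXZ) (Set.disjoint_singleton_left.2 hYZ) hsep'

/-- If `X` is d-separated from `Y` conditional on `Z` in a DAG `G`, then in
every probability distribution satisfying the local directed Markov condition for `G`,
`X` is independent of `Y` conditional on `Z`. -/
theorem dsep_implies_condIndep
    {V : Type*} [Fintype V] [DecidableEq V]
    {Ω : Type*} [mΩ : MeasurableSpace Ω] [StandardBorelSpace Ω]
    (μ : Measure Ω) [IsProbabilityMeasure μ]
    (G : DAG V) (f : V → Ω → ℝ) (hf : ∀ i, Measurable (f i))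
    (hMarkov : LocalMarkov μ f hf G)
    (X Y : V) (Z : Set V) (hXY : X ≠ Y) (hXZ : X ∉ Z) (hYZ : Y ∉ Z)
    (hsep : G.DSep X Y Z) :
    CI μ f hf {X} {Y} Z :=
  dsep_implies_condIndep_general (mΩ := mΩ) μ G f hf hMarkov X Y Z hXY hXZ hYZ hsep
end

section
/- In a DAG G, two vertices X and Y are adjacent if and only if X is not d-separated from Y conditional on any subset of the other vertices of G. -/
/-!
Adjacent vertices are joined by the one-edge path, which no conditioning set blocks.
Conversely, if `X` and `Y` are not adjacent, acyclicity lets us assume (swapping them if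
needed) that `Y` is not a descendant of `X`; then the parents of `X` d-separate them. On an
active path from `X` given `Pa(X)`, the first edge cannot point into `X`, since its head would be
a conditioned noncollider, and no later edge can point backwards, since the resulting collider
would have a descendant in `Pa(X)`, closing a directed cycle through `X`. So the path is directed
and `Y` is a descendant of `X`.
-/

theorem List.Nodup.triple_infix_iff {α : Type*} {l : List α} (hl : l.Nodup) {i : ℕ}
    (hi : i + 2 < l.length) {a c : α} :
    [a, l[i + 1], c] <:+: l ↔ a = l[i] ∧ c = l[i + 2] := by
  rw [List.infix_iff_getElem?]
  constructor
  · rintro ⟨k, -, h⟩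
    obtain ⟨_, hk⟩ := List.getElem?_eq_some_iff.mp (h 1 (by simp))
    obtain rfl : k = i := by have := hl.getElem_inj_iff.mp hk; omega
    have ha := h 0 (by simp)
    have hc := h 2 (by simp)
    grind
  · rintro ⟨rfl, rfl⟩
    refine ⟨i, by simp only [List.length_cons, List.length_nil]; omega, fun j hj => ?_⟩
    simp only [List.length_cons, List.length_nil] at hj
    interval_cases j <;> simp [Nat.add_comm]

namespace DAG

variable {V : Type*} {G : DAG V}

theorem Desc.not_edge {x y : V} (hxy : G.Desc x y) : ¬ G.Edge y x :=
  fun hyx => G.acyclic x (Relation.TransGen.tail' hxy hyx)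

theorem Edge.asymm_s2 {x y : V} (hxy : G.Edge x y) : ¬ G.Edge y x :=
  Desc.not_edge (.single hxy)

theorem notMem_parents_self (x : V) : x ∉ G.Parents x :=
  Desc.not_edge .refl

theorem Adj.symm {x y : V} (h : G.Adj x y) : G.Adj y x :=
  Or.symm h

theorem not_desc_or_not_desc {x y : V} (hxy : x ≠ y) : ¬ G.Desc x y ∨ ¬ G.Desc y x := by
  by_contra! ⟨hxy', hyx⟩
  rcases Relation.reflTransGen_iff_eq_or_transGen.mp hxy' with rfl | hxy'
  · exact hxy rfl
  · exact G.acyclic x (hxy'.trans_left hyx)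

theorem colliderOn_reverse {p : List V} {b : V} :
    G.ColliderOn p.reverse b ↔ G.ColliderOn p b := by
  constructor <;> rintro ⟨a, c, hinf, hab, hcb⟩ <;> refine ⟨c, a, ?_, hcb, hab⟩
  · simpa using List.reverse_infix.mpr hinf
  · exact List.reverse_infix.mpr hinf

theorem colliderOn_getElem_iff {p : List V} (hp : p.Nodup) {i : ℕ} (hi : i + 2 < p.length) :
    G.ColliderOn p p[i + 1] ↔ G.Edge p[i] p[i + 1] ∧ G.Edge p[i + 2] p[i + 1] := by
  simp only [ColliderOn, hp.triple_infix_iff hi]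
  constructor
  · rintro ⟨a, c, ⟨rfl, rfl⟩, hab, hcb⟩
    exact ⟨hab, hcb⟩
  · rintro ⟨hab, hcb⟩
    exact ⟨_, _, ⟨rfl, rfl⟩, hab, hcb⟩

theorem activeOn_reverse {p : List V} {x y b : V} {Z : Set V} :
    G.ActiveOn p.reverse y x Z b ↔ G.ActiveOn p x y Z b := by
  simp only [ActiveOn, colliderOn_reverse]
  tauto

theorem activePath_pair {x y : V} {Z : Set V} (hxy : x ≠ y) (h : G.Adj x y) :
    G.ActivePath [x, y] x y Z :=
  ⟨by simp [hxy], le_rfl, List.isChain_pair.mpr h, rfl, rfl, by simp [ActiveOn]⟩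

namespace ActivePath

variable {p : List V} {x y : V} {Z : Set V}

theorem nodup (hp : G.ActivePath p x y Z) : p.Nodup := hp.1

theorem two_le_length (hp : G.ActivePath p x y Z) : 2 ≤ p.length := hp.2.1

theorem reverse (hp : G.ActivePath p x y Z) : G.ActivePath p.reverse y x Z := by
  obtain ⟨hnodup, hlen, hchain, hhead, hlast, hact⟩ := hp
  exact ⟨List.nodup_reverse.mpr hnodup, by simpa using hlen,
    List.isChain_reverse.mpr (hchain.imp fun _ _ => Adj.symm), by simpa using hlast,
    by simpa using hhead, fun b hb => activeOn_reverse.mpr (hact b (List.mem_reverse.mp hb))⟩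

theorem getElem_zero (hp : G.ActivePath p x y Z) :
    p[0]'(by have := hp.two_le_length; omega) = x := by
  obtain ⟨-, hlen, -, hhead, -⟩ := hp
  rw [List.head?_eq_getElem?, List.getElem?_eq_getElem (by omega)] at hhead
  exact Option.some.inj hhead

theorem getElem_length_sub_one (hp : G.ActivePath p x y Z) :
    p[p.length - 1]'(by have := hp.two_le_length; omega) = y := by
  obtain ⟨-, hlen, -, -, hlast, -⟩ := hp
  rw [List.getLast?_eq_getElem?, List.getElem?_eq_getElem (by omega)] at hlast
  exact Option.some.inj hlast

theorem adj_getElem (hp : G.ActivePath p x y Z) {i : ℕ} (hi : i + 1 < p.length) :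
    G.Adj p[i] p[i + 1] :=
  List.isChain_iff_getElem.mp hp.2.2.1 i hi

theorem adj_of_length_eq_two (hp : G.ActivePath p x y Z) (h2 : p.length = 2) : G.Adj x y := by
  obtain ⟨a, b, rfl⟩ := List.length_eq_two.mp h2
  obtain ⟨-, -, hchain, hhead, hlast, -⟩ := hp
  simp only [List.head?_cons, List.getLast?_cons_cons, List.getLast?_singleton,
    Option.some.injEq] at hhead hlast
  subst hhead hlast
  exact List.isChain_pair.mp hchain

theorem activeOn_getElem_succ (hp : G.ActivePath p x y Z) {i : ℕ} (hi : i + 2 < p.length) :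
    (¬ G.ColliderOn p p[i + 1] ∧ p[i + 1] ∉ Z) ∨
      (G.ColliderOn p p[i + 1] ∧ ∃ d ∈ Z, G.Desc p[i + 1] d) := by
  have hx : p[i + 1] ≠ x := by
    rw [← hp.getElem_zero]
    exact fun h => by simpa using hp.nodup.getElem_inj_iff.mp h
  have hy : p[i + 1] ≠ y := by
    rw [← hp.getElem_length_sub_one]
    exact fun h => by have := hp.nodup.getElem_inj_iff.mp h; omega
  exact ((hp.2.2.2.2.2 _ (List.getElem_mem _)).resolve_left hx).resolve_left hy

theorem edge_getElem_of_mem (hp : G.ActivePath p x y Z) {i : ℕ} (hi : i + 2 < p.length)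
    (hZ : p[i + 1] ∈ Z) : G.Edge p[i] p[i + 1] := by
  rcases hp.activeOn_getElem_succ hi with ⟨-, hnZ⟩ | ⟨hcol, -⟩
  · exact absurd hZ hnZ
  · exact ((colliderOn_getElem_iff hp.nodup hi).mp hcol).1

theorem exists_desc_mem (hp : G.ActivePath p x y Z) {i : ℕ} (hi : i + 2 < p.length)
    (hab : G.Edge p[i] p[i + 1]) (hcb : G.Edge p[i + 2] p[i + 1]) :
    ∃ d ∈ Z, G.Desc p[i + 1] d := by
  rcases hp.activeOn_getElem_succ hi with ⟨hncol, -⟩ | ⟨-, hd⟩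
  · exact absurd ((colliderOn_getElem_iff hp.nodup hi).mpr ⟨hab, hcb⟩) hncol
  · exact hd

theorem edge_getElem_of_parents (hp : G.ActivePath p x y (G.Parents x)) (h3 : 3 ≤ p.length) :
    ∀ i (hi : i + 1 < p.length), G.Edge p[i] p[i + 1] ∧ G.Desc x p[i + 1] := by
  have hx := hp.getElem_zero
  intro i
  induction i with
  | zero =>
    intro hi
    have hedge : G.Edge p[0] p[1] := by
      rcases hp.adj_getElem hi with h | h
      · exact h
      · exact absurd (hp.edge_getElem_of_mem (i := 0) (by omega) (hx ▸ h)) h.asymm_s2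
    exact ⟨hedge, hx ▸ .single hedge⟩
  | succ k ih =>
    intro hi
    obtain ⟨hedge, hdesc⟩ := ih (by omega)
    rcases hp.adj_getElem hi with h | h
    · exact ⟨h, hdesc.tail h⟩
    · obtain ⟨d, hd, hbd⟩ := hp.exists_desc_mem (by omega) hedge h
      exact absurd hd (Desc.not_edge (hdesc.trans hbd))

end ActivePath

theorem DSep.symm {x y : V} {Z : Set V} (h : G.DSep x y Z) : G.DSep y x Z :=
  fun ⟨_, hp⟩ => h ⟨_, hp.reverse⟩

theorem dsep_parents_of_not_adj_of_not_desc {x y : V} (hadj : ¬ G.Adj x y)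
    (hdesc : ¬ G.Desc x y) : G.DSep x y (G.Parents x) := by
  rintro ⟨p, hp⟩
  have h3 : 3 ≤ p.length := by
    by_contra! h
    exact hadj (hp.adj_of_length_eq_two (by have := hp.two_le_length; omega))
  have hy : p[p.length - 2 + 1] = y := by
    simp only [show p.length - 2 + 1 = p.length - 1 by omega, hp.getElem_length_sub_one]
  exact hdesc (hy ▸ (hp.edge_getElem_of_parents h3 (p.length - 2) (by omega)).2)

end DAG

theorem adjacent_iff_not_dsep_any_subset_general
    {V : Type*} (G : DAG V) (X Y : V) (hXY : X ≠ Y) :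
    G.Adj X Y ↔ ∀ W : Set V, X ∉ W → Y ∉ W → ¬ G.DSep X Y W := by
  refine ⟨fun hadj W _ _ hsep => hsep ⟨_, DAG.activePath_pair hXY hadj⟩, fun h => ?_⟩
  by_contra hnadj
  rcases G.not_desc_or_not_desc hXY with hd | hd
  · exact h _ (G.notMem_parents_self X) (fun hY => hnadj (Or.inr hY))
      (DAG.dsep_parents_of_not_adj_of_not_desc hnadj hd)
  · exact h _ (fun hX => hnadj (Or.inl hX)) (G.notMem_parents_self Y)
      (DAG.dsep_parents_of_not_adj_of_not_desc (hnadj ∘ DAG.Adj.symm) hd).symm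

/-- In a DAG `G`, vertices `X` and `Y` are adjacent iff `X` is not
d-separated from `Y` conditional on any subset of the other vertices of `G`. -/
theorem adjacent_iff_not_dsep_any_subset
    {V : Type*} [Fintype V] [DecidableEq V] (G : DAG V) (X Y : V) (hXY : X ≠ Y) :
    G.Adj X Y ↔ ∀ W : Set V, X ∉ W → Y ∉ W → ¬ G.DSep X Y W :=
  adjacent_iff_not_dsep_any_subset_general G X Y hXY
end

section
/- Let M be a recursive linear Gaussian structural equation model over standardized variables V with DAG G. Suppose X_j is not an ancestor of X_i, the edge coefficient of X_i → X_j is b, the conditional variance of every variable given all other variables is at least J > 0, and X[1,...,j] is an ancestral set containing X_i and X_j but no descendant of X_j. Then |b|/√J ≥ |ρ(X_i, X_j | X[1,...,j-1] \ {X_i})| ≥ |b|·√J, where ρ denotes the partial correlation under the model distribution. -/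
open Matrix

namespace SEM

variable {m : ℕ}

/-- `B` is strictly lower triangular (with respect to a causal order):
`B p q` is the structural coefficient of the edge `X_q → X_p`, and all
edges go from smaller to larger indices. -/
def StrictLower (B : Matrix (Fin m) (Fin m) ℝ) : Prop :=
  ∀ p q : Fin m, p ≤ q → B p q = 0

/-- The covariance matrix of the recursive linear Gaussian SEM `X = B X + ε`,
where the errors `ε` are independent with diagonal covariance matrix `D`:
`Σ = (I − B)⁻¹ D (I − B)⁻ᵀ`. -/
noncomputable def cov (B D : Matrix (Fin m) (Fin m) ℝ) : Matrix (Fin m) (Fin m) ℝ :=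
  (1 - B)⁻¹ * D * ((1 - B)ᵀ)⁻¹

/-- The conditional covariance matrix of `(X_i, X_j)` given the variables indexed by
`W`, obtained from the covariance matrix `S` by the Schur complement. -/
noncomputable def condCov (S : Matrix (Fin m) (Fin m) ℝ) (i j : Fin m)
    (W : Finset (Fin m)) : Matrix (Fin 2) (Fin 2) ℝ :=
  S.submatrix ![i, j] ![i, j] -
    S.submatrix ![i, j] (Subtype.val : {x // x ∈ W} → Fin m) *
      (S.submatrix (Subtype.val : {x // x ∈ W} → Fin m)
        (Subtype.val : {x // x ∈ W} → Fin m))⁻¹ *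
      S.submatrix (Subtype.val : {x // x ∈ W} → Fin m) ![i, j]

/-- The partial correlation of `X_i` and `X_j` given the variables indexed by `W`. -/
noncomputable def parcorr (S : Matrix (Fin m) (Fin m) ℝ) (i j : Fin m)
    (W : Finset (Fin m)) : ℝ :=
  condCov S i j W 0 1 / Real.sqrt (condCov S i j W 0 0 * condCov S i j W 1 1)

/-- The directed edge relation of the SEM: `q → p` iff `B p q ≠ 0`. -/
def Edge (B : Matrix (Fin m) (Fin m) ℝ) (q p : Fin m) : Prop := B p q ≠ 0

/-- `p` is a descendant of `q` (reflexive). -/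
def Desc (B : Matrix (Fin m) (Fin m) ℝ) (q p : Fin m) : Prop :=
  Relation.ReflTransGen (Edge B) q p

/-- A set of variables is ancestral: closed under taking parents. -/
def Ancestral (B : Matrix (Fin m) (Fin m) ℝ) (A : Finset (Fin m)) : Prop :=
  ∀ p ∈ A, ∀ q : Fin m, Edge B q p → q ∈ A

/-- The structural coefficient `e_M(X — Z)` of the edge between adjacent `x` and `z`. -/
noncomputable def eCoef (B : Matrix (Fin m) (Fin m) ℝ) (x z : Fin m) : ℝ :=
  if B z x ≠ 0 then B z x else B x z

end SEM

open SEM Matrix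

/-!
The partial correlation given `W` is read off the precision matrix `R = (Σ_AA)⁻¹` of the
marginal on `A = {i, j} ∪ W = {X_0, …, X_j}`: by the Schur complement,
`ρ = −R_ij / √(R_ii R_jj)`. Since `A` is ancestral, the marginal is again an SEM and
`R = (I − B)_Aᵀ D_A⁻¹ (I − B)_A`; as `j` is the last index of `A`, `R_jj = 1/d_j` and
`R_ij = −b/d_j`, whence `ρ = b / √(r d_j)` with `r = R_ii`. Cauchy–Schwarz
(`Σ_aa (Σ⁻¹)_aa ≥ 1`, with unit variances) and `R_aa ≤ (Σ⁻¹)_aa ≤ 1/J` give `1 ≤ r ≤ 1/J` and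
`J ≤ d_j ≤ 1`, hence `J ≤ r d_j ≤ 1/J`.
-/

namespace Matrix

theorem transpose_mul_diagonal_mul_apply {n ι R : Type*} [Fintype ι] [DecidableEq ι]
    [Semiring R] (K : Matrix ι n R) (w : ι → R) (p q : n) :
    (Kᵀ * diagonal w * K) p q = ∑ k, K k p * w k * K k q := by
  simp only [mul_apply (M := Kᵀ * diagonal w), mul_diagonal, transpose_apply]

variable {n ι : Type*} [Fintype n] [Fintype ι]

theorem sub_mul_inv_mul_eq_inv_toBlocks₁₁ [DecidableEq n] [DecidableEq ι] {R : Type*}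
    [CommRing R] (A : Matrix ι ι R) (B : Matrix ι n R) (C : Matrix n ι R) (D : Matrix n n R)
    (hM : IsUnit (fromBlocks A B C D).det) (hD : IsUnit D.det) :
    A - B * D⁻¹ * C = ((fromBlocks A B C D)⁻¹.toBlocks₁₁)⁻¹ := by
  let := D.invertibleOfIsUnitDet hD
  let := (fromBlocks A B C D).invertibleOfIsUnitDet hM
  let := invertibleOfFromBlocks₂₂Invertible A B C D
  rw [← invOf_eq_nonsing_inv (fromBlocks A B C D), invOf_fromBlocks₂₂_eq, toBlocks_fromBlocks₁₁,
    invOf_eq_nonsing_inv, inv_inv_of_invertible, invOf_eq_nonsing_inv]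

theorem PosDef.one_le_mul_inv_apply_self [DecidableEq n] {M : Matrix n n ℝ} (hM : M.PosDef)
    (a : n) : 1 ≤ M a a * M⁻¹ a a := by
  let := hM.isUnit.invertible
  -- `!![M a a, 1; 1, M⁻¹ a a]` is a principal submatrix of the PSD matrix `!![M, 1; 1, M⁻¹]`.
  have hblock : (fromBlocks M 1 1 M⁻¹).PosSemidef := by
    simpa using (PosDef.fromBlocks₁₁ (1 : Matrix n n ℝ) M⁻¹ hM).2 (by simpa using .zero)
  have hdet := (hblock.submatrix ![Sum.inl a, Sum.inr a]).det_nonneg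
  rw [det_fin_two] at hdet
  simpa using hdet

theorem inv_eq_transpose_mul_diagonal_mul [DecidableEq n] {F : Type*} [Field F]
    {K S : Matrix n n F} {e : n → F} (he : ∀ a, e a ≠ 0) (h : K * S * Kᵀ = diagonal e) :
    S⁻¹ = Kᵀ * diagonal e⁻¹ * K := by
  have hright : K * S * (Kᵀ * diagonal e⁻¹) = 1 := by
    rw [← Matrix.mul_assoc, h, diagonal_mul_diagonal, ← diagonal_one]
    exact congrArg diagonal (funext fun a => mul_inv_cancel₀ (he a))
  refine inv_eq_left_inv ?_
  simpa only [Matrix.mul_assoc] using mul_eq_one_comm.mp hright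

theorem submatrix_mul_mul_transpose {R : Type*} [CommRing R] {M : Matrix n n R} {f : ι → n}
    (hf : Function.Injective f) (hM : ∀ a x, x ∉ Set.range f → M (f a) x = 0)
    (N : Matrix n n R) :
    M.submatrix f f * N.submatrix f f * (M.submatrix f f)ᵀ = (M * N * Mᵀ).submatrix f f := by
  have hrow : ∀ P : Matrix n n R, M.submatrix f f * P.submatrix f f = (M * P).submatrix f f := by
    intro P
    ext a b
    simp only [mul_apply, submatrix_apply]
    exact Fintype.sum_of_injective f hf _ _ (fun x hx => by rw [hM a x hx, zero_mul])
      fun _ => rfl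
  rw [hrow, ← transpose_transpose ((M * N).submatrix f f * _), transpose_mul,
    transpose_transpose, transpose_submatrix, hrow, transpose_submatrix, transpose_mul,
    transpose_transpose, Matrix.mul_assoc]

end Matrix

namespace SEM

variable {m : ℕ}

noncomputable def corr (C : Matrix (Fin 2) (Fin 2) ℝ) : ℝ :=
  C 0 1 / √(C 0 0 * C 1 1)

theorem corr_inv {Q : Matrix (Fin 2) (Fin 2) ℝ} (hQ : 0 < Q.det) : corr Q⁻¹ = -corr Q := by
  have hsqrt : √(Q.det⁻¹ * Q 1 1 * (Q.det⁻¹ * Q 0 0)) = Q.det⁻¹ * √(Q 0 0 * Q 1 1) := by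
    rw [show Q.det⁻¹ * Q 1 1 * (Q.det⁻¹ * Q 0 0) = Q.det⁻¹ ^ 2 * (Q 0 0 * Q 1 1) by ring,
      Real.sqrt_mul (by positivity), Real.sqrt_sq (by positivity)]
  simp only [corr, inv_def, adjugate_fin_two, Ring.inverse_eq_inv', Matrix.smul_apply, of_apply,
    cons_val', cons_val_zero, cons_val_one, empty_val', cons_val_fin_one, smul_eq_mul, hsqrt]
  rw [mul_div_mul_left _ _ (inv_ne_zero hQ.ne'), neg_div]

def condIdx (i j : Fin m) (W : Finset (Fin m)) : Fin 2 ⊕ W → Fin m :=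
  Sum.elim ![i, j] Subtype.val

@[simp]
theorem condIdx_inl_zero (i j : Fin m) (W : Finset (Fin m)) : condIdx i j W (Sum.inl 0) = i :=
  rfl

@[simp]
theorem condIdx_inl_one (i j : Fin m) (W : Finset (Fin m)) : condIdx i j W (Sum.inl 1) = j :=
  rfl

theorem condIdx_injective {i j : Fin m} {W : Finset (Fin m)} (hij : i ≠ j) (hi : i ∉ W)
    (hj : j ∉ W) : Function.Injective (condIdx i j W) := by
  refine Function.Injective.sumElim ?_ Subtype.val_injective fun a w => ?_
  · intro a b
    fin_cases a <;> fin_cases b <;> simp [hij, hij.symm]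
  · intro h
    fin_cases a
    · exact hi ((show i = w from h) ▸ w.2)
    · exact hj ((show j = w from h) ▸ w.2)

theorem image_condIdx_eq_Iic {i j : Fin m} (hij : i < j) :
    Finset.univ.image (condIdx i j (Finset.univ.filter fun p => p < j ∧ p ≠ i)) =
      Finset.Iic j := by
  ext p
  simp only [condIdx, Finset.mem_image, Finset.mem_univ, true_and, Sum.exists, Sum.elim_inl,
    Sum.elim_inr, Fin.exists_fin_two, cons_val_zero, cons_val_one, cons_val_fin_one,
    Subtype.exists, Finset.mem_filter, exists_prop, exists_eq_right, Finset.mem_Iic]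
  grind

theorem condCov_eq_inv_toBlocks₁₁ {S : Matrix (Fin m) (Fin m) ℝ} (hS : S.PosDef)
    {i j : Fin m} {W : Finset (Fin m)} (hf : Function.Injective (condIdx i j W)) :
    condCov S i j W = ((S.submatrix (condIdx i j W) (condIdx i j W))⁻¹.toBlocks₁₁)⁻¹ := by
  have hblocks : S.submatrix (condIdx i j W) (condIdx i j W) =
      fromBlocks (S.submatrix ![i, j] ![i, j]) (S.submatrix ![i, j] Subtype.val)
        (S.submatrix Subtype.val ![i, j]) (S.submatrix Subtype.val Subtype.val) :=
    (fromBlocks_toBlocks _).symm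
  rw [hblocks, ← sub_mul_inv_mul_eq_inv_toBlocks₁₁]
  · rfl
  · exact isUnit_iff_ne_zero.mpr (hblocks ▸ (hS.submatrix hf).det_pos.ne')
  · exact isUnit_iff_ne_zero.mpr (hS.submatrix Subtype.val_injective).det_pos.ne'

theorem parcorr_eq_neg_corr {S : Matrix (Fin m) (Fin m) ℝ} (hS : S.PosDef)
    {i j : Fin m} {W : Finset (Fin m)} (hf : Function.Injective (condIdx i j W)) :
    parcorr S i j W = -corr ((S.submatrix (condIdx i j W) (condIdx i j W))⁻¹.toBlocks₁₁) := by
  have hQ : ((S.submatrix (condIdx i j W) (condIdx i j W))⁻¹.toBlocks₁₁).PosDef :=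
    (hS.submatrix hf).inv.submatrix Sum.inl_injective
  rw [← corr_inv hQ.det_pos, ← condCov_eq_inv_toBlocks₁₁ hS hf]
  rfl

variable {ι : Type*} [Fintype ι] [DecidableEq ι] {B : Matrix (Fin m) (Fin m) ℝ}

theorem StrictLower.isUnit_det_one_sub (hB : StrictLower B) : IsUnit (1 - B).det := by
  have hlow : (1 - B).IsLowerTriangular := fun p q (hpq : p < q) => by
    simp [one_apply_ne hpq.ne, hB p q hpq.le]
  rw [det_of_isLowerTriangular _ hlow]
  simp [hB _ _ le_rfl]

theorem StrictLower.ancestral_Iic (hB : StrictLower B) (j : Fin m) :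
    Ancestral B (Finset.Iic j) := by
  intro p hp q hqp
  rw [Finset.mem_Iic] at hp ⊢
  exact (lt_of_not_ge fun h => hqp (hB p q h)).le.trans hp

theorem posDef_cov (hL : IsUnit (1 - B).det) {D : Matrix (Fin m) (Fin m) ℝ} (hD : D.PosDef) :
    (cov B D).PosDef := by
  have hU : IsUnit (1 - B)⁻¹ := (isUnit_iff_isUnit_det _).mpr (isUnit_nonsing_inv_det_iff.mpr hL)
  rw [cov, ← transpose_nonsing_inv]
  exact (IsUnit.posDef_star_right_conjugate_iff hU).mpr hD

theorem one_sub_mul_cov_mul_transpose (hL : IsUnit (1 - B).det) (D : Matrix (Fin m) (Fin m) ℝ) :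
    (1 - B) * cov B D * (1 - B)ᵀ = D := by
  have hLT : IsUnit (1 - B)ᵀ.det := by rwa [det_transpose]
  rw [cov, ← Matrix.mul_assoc, ← Matrix.mul_assoc, mul_nonsing_inv _ hL, Matrix.one_mul,
    nonsing_inv_mul_cancel_right _ _ hLT]

theorem inv_submatrix_cov_apply (hL : IsUnit (1 - B).det) {d : Fin m → ℝ} (hd : ∀ p, d p ≠ 0)
    {f : ι → Fin m} (hf : Function.Injective f) (hA : Ancestral B (Finset.univ.image f))
    (a c : ι) :
    ((cov B (diagonal d)).submatrix f f)⁻¹ a c =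
      ∑ x, (1 - B) (f x) (f a) * (d (f x))⁻¹ * (1 - B) (f x) (f c) := by
  -- Ancestrality: the rows of `I − B` indexed by `f` vanish off `range f`, so the identity
  -- `(I − B) Σ (I − B)ᵀ = D` restricts to `range f`.
  have hrow : ∀ a x, x ∉ Set.range f → (1 - B) (f a) x = 0 := by
    intro a x hx
    have hne : f a ≠ x := fun h => hx ⟨a, h⟩
    have hedge : ¬Edge B x (f a) := fun h =>
      hx (by simpa using hA (f a) (Finset.mem_image_of_mem f (Finset.mem_univ a)) x h)
    simpa [one_apply_ne hne, Edge] using hedge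
  have hKSK := submatrix_mul_mul_transpose hf hrow (cov B (diagonal d))
  rw [one_sub_mul_cov_mul_transpose hL, submatrix_diagonal _ _ hf] at hKSK
  rw [inv_eq_transpose_mul_diagonal_mul (fun a => hd (f a)) hKSK,
    transpose_mul_diagonal_mul_apply]
  rfl

theorem inv_submatrix_cov_apply_self_le (hL : IsUnit (1 - B).det) {d : Fin m → ℝ}
    (hd : ∀ p, 0 < d p) {f : ι → Fin m} (hf : Function.Injective f)
    (hA : Ancestral B (Finset.univ.image f)) (a : ι) :
    ((cov B (diagonal d)).submatrix f f)⁻¹ a a ≤ (cov B (diagonal d))⁻¹ (f a) (f a) := by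
  have hd' : ∀ p, d p ≠ 0 := fun p => (hd p).ne'
  have hfull := inv_submatrix_cov_apply hL hd' Function.injective_id
    (fun _ _ q _ => by simp) (f a) (f a)
  rw [submatrix_id_id] at hfull
  rw [inv_submatrix_cov_apply hL hd' hf hA, hfull]
  set g : Fin m → ℝ := fun p => (1 - B) p (f a) * (d p)⁻¹ * (1 - B) p (f a)
  calc ∑ x, g (f x) = ∑ p ∈ Finset.univ.map ⟨f, hf⟩, g p := (Finset.sum_map _ ⟨f, hf⟩ g).symm
    _ ≤ ∑ p, g p := Finset.sum_le_univ_sum_of_nonneg fun p => by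
      simpa only [g, mul_right_comm] using
        mul_nonneg (mul_self_nonneg ((1 - B) p (f a))) (inv_pos.mpr (hd p)).le

theorem inv_submatrix_cov_apply_of_forall_le (hB : StrictLower B) {d : Fin m → ℝ}
    (hd : ∀ p, d p ≠ 0) {f : ι → Fin m} (hf : Function.Injective f)
    (hA : Ancestral B (Finset.univ.image f)) {a : ι} (hmax : ∀ x, f x ≤ f a) (c : ι) :
    ((cov B (diagonal d)).submatrix f f)⁻¹ c a = (1 - B) (f a) (f c) * (d (f a))⁻¹ := by
  rw [inv_submatrix_cov_apply hB.isUnit_det_one_sub hd hf hA, Fintype.sum_eq_single a]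
  · simp [hB _ _ le_rfl]
  · intro x hx
    have hlt : f x < f a := (hmax x).lt_of_ne (hf.ne hx)
    simp [one_apply_ne hlt.ne, hB _ _ hlt.le]

theorem parcorr_cov_eq (hB : StrictLower B) {d : Fin m → ℝ} (hd : ∀ p, 0 < d p)
    {i j : Fin m} {W : Finset (Fin m)} (hf : Function.Injective (condIdx i j W))
    (hA : Ancestral B (Finset.univ.image (condIdx i j W))) (hmax : ∀ x, condIdx i j W x ≤ j) :
    parcorr (cov B (diagonal d)) i j W =
      B j i / √(((cov B (diagonal d)).submatrix (condIdx i j W) (condIdx i j W))⁻¹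
        (Sum.inl 0) (Sum.inl 0) * d j) := by
  set r := ((cov B (diagonal d)).submatrix (condIdx i j W) (condIdx i j W))⁻¹
    (Sum.inl 0) (Sum.inl 0)
  have hcol := inv_submatrix_cov_apply_of_forall_le hB (fun p => (hd p).ne') hf hA
    (a := Sum.inl 1) hmax
  have hij : i ≠ j := hf.ne (a₁ := Sum.inl 0) (a₂ := Sum.inl 1) (by simp)
  have hsqrt : √(r * (d j)⁻¹) = √(r * d j) / d j := by
    rw [show r * (d j)⁻¹ = r * d j / d j ^ 2 by field_simp, Real.sqrt_div' _ (sq_nonneg _),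
      Real.sqrt_sq (hd j).le]
  rw [parcorr_eq_neg_corr (posDef_cov hB.isUnit_det_one_sub (posDef_diagonal_iff.mpr hd)) hf]
  have hji : (1 - B) j i = -B j i := by simp [one_apply_ne hij.symm]
  have hjj : (1 - B) j j = 1 := by simp [hB j j le_rfl]
  simp only [corr, toBlocks₁₁, of_apply, hcol, condIdx_inl_zero, condIdx_inl_one, hji, hjj,
    one_mul]
  rw [hsqrt, neg_mul, neg_div, neg_neg, div_div_eq_mul_div, inv_mul_cancel_right₀ (hd j).ne']

theorem abs_div_sqrt_bounds (b : ℝ) {J x : ℝ} (hJ : 0 < J) (hx : J ≤ x) (hx' : x ≤ J⁻¹) :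
    |b| / √J ≥ |b / √x| ∧ |b / √x| ≥ |b| * √J := by
  have hxpos : 0 < x := hJ.trans_le hx
  rw [abs_div, abs_of_nonneg (Real.sqrt_nonneg x)]
  refine ⟨div_le_div_of_nonneg_left (abs_nonneg b) (Real.sqrt_pos.mpr hJ) (Real.sqrt_le_sqrt hx),
    ?_⟩
  rw [← div_inv_eq_mul, ← Real.sqrt_inv]
  exact div_le_div_of_nonneg_left (abs_nonneg b) (Real.sqrt_pos.mpr hxpos) (Real.sqrt_le_sqrt hx')

end SEM

/-- Lemma 2: In a recursive linear Gaussian SEM over standardized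
variables with conditional variances bounded below by `J` (NVV(J)), if `X_j` is not an
ancestor of `X_i` (here: `i < j` in the causal order, so that `{X_0, …, X_j}` is an
ancestral set containing `X_i` and `X_j` but no descendant of `X_j`) and `b = B j i` is
the coefficient of the edge `X_i → X_j`, then
`|b|/√J ≥ |ρ(X_i, X_j | X[0,…,j−1] \ {X_i})| ≥ |b|·√J`. -/
theorem lemma2_parcorr_bounds {m : ℕ}
    (B : Matrix (Fin m) (Fin m) ℝ) (d : Fin m → ℝ)
    (hB : SEM.StrictLower B) (hd : ∀ p, 0 < d p)
    (J : ℝ) (hJ : 0 < J)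
    (hstd : ∀ p, SEM.cov B (Matrix.diagonal d) p p = 1)
    (hNVV : ∀ p, J ≤ (((SEM.cov B (Matrix.diagonal d))⁻¹) p p)⁻¹)
    (i j : Fin m) (hij : i < j) :
    |B j i| / Real.sqrt J ≥
        |SEM.parcorr (SEM.cov B (Matrix.diagonal d)) i j
          (Finset.univ.filter fun p => p < j ∧ p ≠ i)| ∧
      |SEM.parcorr (SEM.cov B (Matrix.diagonal d)) i j
          (Finset.univ.filter fun p => p < j ∧ p ≠ i)| ≥
        |B j i| * Real.sqrt J := by
  set S := cov B (diagonal d)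
  set W := Finset.univ.filter fun p => p < j ∧ p ≠ i
  have hf : Function.Injective (condIdx i j W) :=
    condIdx_injective hij.ne (by simp [W]) (by simp [W])
  have himage : Finset.univ.image (condIdx i j W) = Finset.Iic j := image_condIdx_eq_Iic hij
  have hA : Ancestral B (Finset.univ.image (condIdx i j W)) := himage ▸ hB.ancestral_Iic j
  have hmax : ∀ x, condIdx i j W x ≤ j := fun x =>
    Finset.mem_Iic.mp (himage ▸ Finset.mem_image_of_mem _ (Finset.mem_univ x))
  have hL := hB.isUnit_det_one_sub
  have hS : S.PosDef := posDef_cov hL (posDef_diagonal_iff.mpr hd)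
  have hprec : ∀ p, S⁻¹ p p ≤ J⁻¹ := fun p => (le_inv_comm₀ hJ hS.inv.diag_pos).mp (hNVV p)
  set P := (S.submatrix (condIdx i j W) (condIdx i j W))⁻¹
  have hPjj : P (.inl 1) (.inl 1) = (d j)⁻¹ := by
    simpa [hB j j le_rfl] using inv_submatrix_cov_apply_of_forall_le hB (fun p => (hd p).ne') hf
      hA (a := .inl 1) hmax (.inl 1)
  have hr1 : 1 ≤ P (.inl 0) (.inl 0) := by
    simpa [hstd i] using (hS.submatrix hf).one_le_mul_inv_apply_self (.inl 0)
  have hrJ := (inv_submatrix_cov_apply_self_le hL hd hf hA (.inl 0)).trans (hprec i)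
  have ht1 : d j ≤ 1 := by
    rw [← one_le_inv₀ (hd j), ← hPjj]
    simpa [hstd j] using (hS.submatrix hf).one_le_mul_inv_apply_self (.inl 1)
  have htJ : J ≤ d j := by
    rw [← inv_le_inv₀ (hd j) hJ, ← hPjj]
    exact (inv_submatrix_cov_apply_self_le hL hd hf hA (.inl 1)).trans (hprec j)
  rw [parcorr_cov_eq hB hd hf hA hmax]
  exact abs_div_sqrt_bounds _ hJ (htJ.trans (le_mul_of_one_le_left (hd j).le hr1))
    ((mul_le_of_le_one_right (zero_le_one.trans hr1) ht1).trans hrJ)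
end

section
/- If the true causal DAG G satisfies the Causal Markov and Triangle-Faithfulness assumptions with respect to a perfect oracle, and (X, Y, Z) is a triple with X adjacent to Y and Y adjacent to Z (in G), such that X and Z are independent given some set containing Y and also independent given some set not containing Y, then X and Z are not adjacent in G. -/
/-- The Triangle-Faithfulness assumption (pairwise oracle form). -/
def TriangleFaithful {V : Type*} (G : DAG V) (CI : V → V → Set V → Prop) : Prop :=
  ∀ x y z : V, G.Adj x y → G.Adj y z → G.Adj x z →
    ((¬ (G.Edge x y ∧ G.Edge z y) →
        ∀ S : Set V, x ∉ S → z ∉ S → y ∉ S → ¬ CI x z S) ∧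
     ((G.Edge x y ∧ G.Edge z y) →
        ∀ S : Set V, x ∉ S → z ∉ S → y ∈ S → ¬ CI x z S))

namespace TriangleFaithful

variable {V : Type*} {G : DAG V} {CI : V → V → Set V → Prop}

theorem not_adj_of_collider (hTF : TriangleFaithful G CI) {x y z : V}
    (hxy : G.Edge x y) (hzy : G.Edge z y) {S : Set V} (hxS : x ∉ S) (hzS : z ∉ S)
    (hyS : y ∈ S) (hCI : CI x z S) : ¬ G.Adj x z := fun hxz =>
  (hTF x y z (.inl hxy) (.inr hzy) hxz).2 ⟨hxy, hzy⟩ S hxS hzS hyS hCI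

theorem not_adj_of_not_collider (hTF : TriangleFaithful G CI) {x y z : V}
    (hxy : G.Adj x y) (hyz : G.Adj y z) (hcol : ¬ (G.Edge x y ∧ G.Edge z y)) {S : Set V}
    (hxS : x ∉ S) (hzS : z ∉ S) (hyS : y ∉ S) (hCI : CI x z S) : ¬ G.Adj x z := fun hxz =>
  (hTF x y z hxy hyz hxz).1 hcol S hxS hzS hyS hCI

end TriangleFaithful

theorem definite_nonadjacency_sound_general
    {V : Type*} (G : DAG V)
    (CI : V → V → Set V → Prop)
    (hTF : TriangleFaithful G CI)
    (x y z : V) (hxy : G.Adj x y) (hyz : G.Adj y z)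
    (h1 : ∃ S : Set V, x ∉ S ∧ z ∉ S ∧ y ∈ S ∧ CI x z S)
    (h2 : ∃ S : Set V, x ∉ S ∧ z ∉ S ∧ y ∉ S ∧ CI x z S) :
    ¬ G.Adj x z := by
  by_cases hcol : G.Edge x y ∧ G.Edge z y
  · obtain ⟨S, hxS, hzS, hyS, hCI⟩ := h1
    exact hTF.not_adj_of_collider hcol.1 hcol.2 hxS hzS hyS hCI
  · obtain ⟨S, hxS, hzS, hyS, hCI⟩ := h2
    exact hTF.not_adj_of_not_collider hxy hyz hcol hxS hzS hyS hCI

/-- If the true causal DAG `G` satisfies the Causal Markov and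
Triangle-Faithfulness assumptions with respect to a perfect oracle, and `(x, y, z)` is a
triple with `x` adjacent to `y` and `y` adjacent to `z`, such that `x` and `z` are
independent given some set containing `y` and also independent given some set not
containing `y`, then `x` and `z` are not adjacent in `G`. -/
theorem definite_nonadjacency_sound
    {V : Type*} [Fintype V] [DecidableEq V] (G : DAG V)
    (CI : V → V → Set V → Prop)
    (hMarkov : ∀ (x y : V) (Z : Set V), G.DSep x y Z → CI x y Z)
    (hTF : TriangleFaithful G CI)
    (x y z : V) (hxy : G.Adj x y) (hyz : G.Adj y z)
    (h1 : ∃ S : Set V, x ∉ S ∧ z ∉ S ∧ y ∈ S ∧ CI x z S)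
    (h2 : ∃ S : Set V, x ∉ S ∧ z ∉ S ∧ y ∉ S ∧ CI x z S) :
    ¬ G.Adj x z :=
  definite_nonadjacency_sound_general G CI hTF x y z hxy hyz h1 h2
end
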